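/- arXiv:2411.15956 — 2 statements merged into one kernel-verified Lean document; each statement's English description precedes it below -/
import Mathlib

section
/- Let g ∈ Mat_{n+4}(ℝ) satisfy gᵗS₁g = S₁, and suppose there exists λ ∈ ℂ such that g·v = λ·v, where v = (1, i, 0, …, 0, i, 1)ᵗ ∈ ℂ^{n+4} (first coordinate 1, second coordinate i, then n zeros, then i, then 1). Then gᵗR_Ig = R_I; equivalently, (g⁻¹)ᵗR_Ig⁻¹ = R_I, i.e. R_I[g⁻¹] = R_I. -/
/-!
Write `v = tubeV n`. Since `S₁ v = v`, the relations `gᵀ S₁ g = S₁` and `g v = λ v` give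
`λ gᵀ v = v`. Pairing this with `v̄`, which satisfies `g v̄ = λ̄ v̄` because `g` is real, forces
`|λ| = 1`; so `gᵀ v = λ̄ v`, `gᵀ v̄ = λ v̄`, and `gᵀ (v v̄ᵗ) g = v v̄ᵗ`. As `g` is real, the same holds
for `Re (v v̄ᵗ)`, and `R_I = Re (v v̄ᵗ) - S₁`. Finally `det R_I = det S ≠ 0` makes `g` invertible.
-/

open Matrix

noncomputable section

/-- Border an `m×m` matrix `A` to the `(m+2)×(m+2)` matrix `[[0,0,1],[0,A,0],[1,0,0]]`
(block sizes `1, m, 1`). -/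
def triBorder {α : Type*} [Zero α] [One α] {m : ℕ} (A : Matrix (Fin m) (Fin m) α) :
    Matrix (Fin (m + 2)) (Fin (m + 2)) α :=
  Matrix.of fun i j =>
    if hij : 0 < i.val ∧ i.val < m + 1 ∧ 0 < j.val ∧ j.val < m + 1 then
      A ⟨i.val - 1, by omega⟩ ⟨j.val - 1, by omega⟩
    else if (i.val = 0 ∧ j.val = m + 1) ∨ (i.val = m + 1 ∧ j.val = 0) then 1 else 0

/-- `S₀ = [[0,0,1],[0,−S,0],[1,0,0]] ∈ Mat_{n+2}(ℝ)` (block sizes `1, n, 1`). -/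
def matS0 (n : ℕ) (S : Matrix (Fin n) (Fin n) ℝ) : Matrix (Fin (n + 2)) (Fin (n + 2)) ℝ :=
  triBorder (-S)

/-- `S₁ = [[0,0,1],[0,S₀,0],[1,0,0]] ∈ Mat_{n+4}(ℝ)` (block sizes `1, n+2, 1`). -/
def matS1 (n : ℕ) (S : Matrix (Fin n) (Fin n) ℝ) : Matrix (Fin (n + 4)) (Fin (n + 4)) ℝ :=
  triBorder (matS0 n S)

/-- `R_I = diag(1, 1, S, 1, 1) ∈ Mat_{n+4}(ℝ)`. -/
def matRI (n : ℕ) (S : Matrix (Fin n) (Fin n) ℝ) : Matrix (Fin (n + 4)) (Fin (n + 4)) ℝ :=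
  Matrix.of fun i j =>
    if hij : 2 ≤ i.val ∧ i.val < n + 2 ∧ 2 ≤ j.val ∧ j.val < n + 2 then
      S ⟨i.val - 2, by omega⟩ ⟨j.val - 2, by omega⟩
    else if i = j then 1 else 0

/-- The vector `v = (1, i, 0, …, 0, i, 1)ᵗ ∈ ℂ^{n+4}` encoding the point
`I = (i, 0, …, 0, i)` of the tube domain. -/
def tubeV (n : ℕ) : Fin (n + 4) → ℂ := fun k =>
  if k.val = 0 ∨ k.val = n + 3 then 1
  else if k.val = 1 ∨ k.val = n + 2 then Complex.I else 0

section

variable {m n : Type*} [Fintype m]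

theorem Matrix.transpose_mul_vecMulVec_mul {R : Type*} [CommSemiring R] (A : Matrix m n R)
    (a b : m → R) : Aᵀ * vecMulVec a b * A = vecMulVec (Aᵀ *ᵥ a) (Aᵀ *ᵥ b) := by
  rw [mul_vecMulVec, vecMulVec_mul, ← mulVec_transpose]

theorem Matrix.map_ofReal_mulVec_star (g : Matrix n m ℝ) (u : m → ℂ) :
    g.map Complex.ofReal *ᵥ star u = star (g.map Complex.ofReal *ᵥ u) := by
  ext i
  simp [mulVec, dotProduct, star_sum]

theorem Matrix.map_re_transpose_mul_mul (g : Matrix m n ℝ) (W : Matrix m m ℂ) :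
    ((g.map Complex.ofReal)ᵀ * W * g.map Complex.ofReal).map Complex.re =
      gᵀ * W.map Complex.re * g := by
  ext i j
  simp [mul_apply, Complex.re_sum, Finset.sum_mul]

theorem smul_transpose_mulVec_eq_of_isometry {R : Type*} [CommSemiring R] {Q g : Matrix m m R}
    {v : m → R} {c : R} (hg : gᵀ * Q * g = Q) (hQ : Q *ᵥ v = v) (hgv : g *ᵥ v = c • v) :
    c • (gᵀ *ᵥ v) = v := by
  have h := congrArg (· *ᵥ v) hg
  rwa [← mulVec_mulVec, ← mulVec_mulVec, hgv, mulVec_smul, mulVec_smul, hQ] at h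

end

section

open ComplexOrder

variable {m : Type*} [Fintype m] {g Q : Matrix m m ℝ} {v : m → ℂ} {c : ℂ}

theorem Matrix.map_ofReal_transpose_mul_mul_eq (hg : gᵀ * Q * g = Q) :
    (g.map Complex.ofReal)ᵀ * Q.map Complex.ofReal * g.map Complex.ofReal =
      Q.map Complex.ofReal := by
  have h := congrArg (·.map Complex.ofRealHom) hg
  simp only [Matrix.map_mul] at h
  rwa [transpose_map] at h

theorem star_mul_self_eq_one_of_isometry (hg : gᵀ * Q * g = Q)
    (hQ : Q.map Complex.ofReal *ᵥ v = v) (hv : v ≠ 0) (hgv : g.map Complex.ofReal *ᵥ v = c • v) :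
    star c * c = 1 := by
  have hc := smul_transpose_mulVec_eq_of_isometry (map_ofReal_transpose_mul_mul_eq hg) hQ hgv
  have hgv' : g.map Complex.ofReal *ᵥ star v = star c • star v := by
    rw [map_ofReal_mulVec_star, hgv, star_smul]
  have hvv : star v ⬝ᵥ v ≠ 0 := mt dotProduct_star_self_eq_zero.1 hv
  have h := congrArg (star v ⬝ᵥ ·) hc
  rw [dotProduct_smul, dotProduct_mulVec, vecMul_transpose, hgv', smul_dotProduct, smul_eq_mul,
    smul_eq_mul, ← mul_assoc] at h
  exact mul_right_cancel₀ hvv (by rw [one_mul, mul_comm (star c)]; exact h)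

theorem transpose_mul_map_re_vecMulVec_star_mul_of_isometry (hg : gᵀ * Q * g = Q)
    (hQ : Q.map Complex.ofReal *ᵥ v = v) (hv : v ≠ 0) (hgv : g.map Complex.ofReal *ᵥ v = c • v) :
    gᵀ * (vecMulVec v (star v)).map Complex.re * g = (vecMulVec v (star v)).map Complex.re := by
  have hnorm := star_mul_self_eq_one_of_isometry hg hQ hv hgv
  have hc := smul_transpose_mulVec_eq_of_isometry (map_ofReal_transpose_mul_mul_eq hg) hQ hgv
  have hgtv : (g.map Complex.ofReal)ᵀ *ᵥ v = star c • v := by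
    conv_rhs => rw [← hc, smul_smul, hnorm, one_smul]
  have hgtv' : (g.map Complex.ofReal)ᵀ *ᵥ star v = c • star v := by
    rw [← transpose_map, map_ofReal_mulVec_star, transpose_map, hgtv, star_smul, star_star]
  rw [← map_re_transpose_mul_mul, transpose_mul_vecMulVec_mul, hgtv, hgtv', smul_vecMulVec,
    vecMulVec_smul, smul_smul, hnorm, one_smul]

theorem Matrix.transpose_nonsing_inv_mul_mul_eq {K : Type*} [CommRing K] [DecidableEq m]
    {R g : Matrix m m K} (hR : IsUnit R.det) (h : gᵀ * R * g = R) : (g⁻¹)ᵀ * R * g⁻¹ = R := by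
  have hg : IsUnit g.det := by
    apply isUnit_of_mul_isUnit_right (x := gᵀ.det * R.det)
    rwa [← det_mul, ← det_mul, h]
  calc (g⁻¹)ᵀ * R * g⁻¹ = (g * g⁻¹)ᵀ * R * (g * g⁻¹) := by
        conv_lhs => rw [← h]
        simp only [transpose_mul, Matrix.mul_assoc]
    _ = R := by simp [mul_nonsing_inv g hg]

end

theorem matS1_apply (n : ℕ) (A : Matrix (Fin n) (Fin n) ℝ) (i j : Fin (n + 4)) :
    matS1 n A i j =
      if h : 2 ≤ i.val ∧ i.val < n + 2 ∧ 2 ≤ j.val ∧ j.val < n + 2 then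
        -A ⟨i.val - 2, by omega⟩ ⟨j.val - 2, by omega⟩
      else if (i.val = 0 ∧ j.val = n + 3) ∨ (i.val = n + 3 ∧ j.val = 0)
            ∨ (i.val = 1 ∧ j.val = n + 2) ∨ (i.val = n + 2 ∧ j.val = 1) then 1 else 0 := by
  unfold matS1 matS0 triBorder
  simp only [Matrix.of_apply, Matrix.neg_apply]
  split_ifs <;> first | rfl | omega

theorem tubeV_ne_zero (n : ℕ) : tubeV n ≠ 0 := by
  intro h
  simpa [tubeV] using congrFun h 0

theorem tubeV_eq_sum_single (n : ℕ) :
    tubeV n = Pi.single 0 1 + Pi.single 1 Complex.I + Pi.single ⟨n + 2, by omega⟩ Complex.I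
      + Pi.single ⟨n + 3, by omega⟩ 1 := by
  ext ⟨k, hk⟩
  simp only [tubeV, Pi.add_apply, Pi.single_apply, Fin.ext_iff, Fin.val_zero, Fin.val_one]
  split_ifs <;> first | omega | simp

theorem matS1_map_ofReal_mulVec_tubeV (n : ℕ) (A : Matrix (Fin n) (Fin n) ℝ) :
    (matS1 n A).map Complex.ofReal *ᵥ tubeV n = tubeV n := by
  -- `tubeV` lives on the outer coordinates, where `S₁` swaps `0 ↔ n + 3` and `1 ↔ n + 2`.
  conv_lhs => rw [tubeV_eq_sum_single]
  ext ⟨i, hi⟩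
  simp only [mulVec_add, mulVec_single, Pi.add_apply, Pi.smul_apply, col_apply, map_apply,
    matS1_apply, tubeV, Fin.val_zero, Fin.val_one]
  simp
  split_ifs <;> first | omega | simp

theorem matRI_eq_map_re_vecMulVec_tubeV_sub_matS1 (n : ℕ) (A : Matrix (Fin n) (Fin n) ℝ) :
    matRI n A = (vecMulVec (tubeV n) (star (tubeV n))).map Complex.re - matS1 n A := by
  ext ⟨i, hi⟩ ⟨j, hj⟩
  simp only [matRI, of_apply, Matrix.sub_apply, map_apply, vecMulVec_apply, Pi.star_apply,
    matS1_apply, tubeV, Fin.mk.injEq]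
  split_ifs <;> first | omega | simp

def matRIBlockEquiv (n : ℕ) : Fin 2 ⊕ (Fin n ⊕ Fin 2) ≃ Fin (n + 4) :=
  (Equiv.sumCongr (Equiv.refl _) finSumFinEquiv).trans (finSumFinEquiv.trans (finCongr (by omega)))

theorem matRI_submatrix_matRIBlockEquiv (n : ℕ) (A : Matrix (Fin n) (Fin n) ℝ) :
    (matRI n A).submatrix (matRIBlockEquiv n) (matRIBlockEquiv n) =
      fromBlocks 1 0 0 (fromBlocks A 0 0 1) := by
  ext (i | i | i) (j | j | j) <;> simp [matRI, matRIBlockEquiv, Fin.ext_iff, one_apply] <;>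
    first | omega | (split_ifs <;> first | rfl | omega)

theorem det_matRI (n : ℕ) (A : Matrix (Fin n) (Fin n) ℝ) : (matRI n A).det = A.det := by
  rw [← det_submatrix_equiv_self (matRIBlockEquiv n), matRI_submatrix_matRIBlockEquiv,
    det_fromBlocks_zero₂₁, det_fromBlocks_zero₂₁]
  simp

theorem stmt3_general (n : ℕ) (S : Matrix (Fin n) (Fin n) ℤ)
    (hSpos : (S.map (Int.cast : ℤ → ℝ)).PosDef)
    (g : Matrix (Fin (n + 4)) (Fin (n + 4)) ℝ)
    (hg : gᵀ * matS1 n (S.map (Int.cast : ℤ → ℝ)) * g = matS1 n (S.map (Int.cast : ℤ → ℝ)))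
    (hfix : ∃ lam : ℂ, (g.map (Complex.ofReal)) *ᵥ tubeV n = lam • tubeV n) :
    gᵀ * matRI n (S.map (Int.cast : ℤ → ℝ)) * g = matRI n (S.map (Int.cast : ℤ → ℝ)) ∧
    (g⁻¹)ᵀ * matRI n (S.map (Int.cast : ℤ → ℝ)) * g⁻¹ = matRI n (S.map (Int.cast : ℤ → ℝ)) := by
  obtain ⟨lam, hlam⟩ := hfix
  have hW := transpose_mul_map_re_vecMulVec_star_mul_of_isometry hg
    (matS1_map_ofReal_mulVec_tubeV n _) (tubeV_ne_zero n) hlam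
  have hR : gᵀ * matRI n (S.map (Int.cast : ℤ → ℝ)) * g = matRI n (S.map (Int.cast : ℤ → ℝ)) := by
    rw [matRI_eq_map_re_vecMulVec_tubeV_sub_matS1, Matrix.mul_sub, Matrix.sub_mul, hW, hg]
  refine ⟨hR, transpose_nonsing_inv_mul_mul_eq ?_ hR⟩
  rw [det_matRI]
  exact hSpos.det_pos.ne'.isUnit

/-- **Stabilizer of the base point preserves the majorant `R_I`.**
If `gᵀ S₁ g = S₁` and `g·v = λ·v` for some `λ ∈ ℂ`, where
`v = (1, i, 0, …, 0, i, 1)ᵗ`, then `gᵀ R_I g = R_I`; equivalently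
`(g⁻¹)ᵀ R_I g⁻¹ = R_I`, i.e. `R_I[g⁻¹] = R_I`. -/
theorem stmt3 (n : ℕ) (hn : 1 ≤ n) (S : Matrix (Fin n) (Fin n) ℤ)
    (hSsymm : S.IsSymm) (hSpos : (S.map (Int.cast : ℤ → ℝ)).PosDef)
    (hSeven : ∀ x : Fin n → ℤ, 2 ∣ x ⬝ᵥ S.mulVec x)
    (g : Matrix (Fin (n + 4)) (Fin (n + 4)) ℝ)
    (hg : gᵀ * matS1 n (S.map (Int.cast : ℤ → ℝ)) * g = matS1 n (S.map (Int.cast : ℤ → ℝ)))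
    (hfix : ∃ lam : ℂ, (g.map (Complex.ofReal)) *ᵥ tubeV n = lam • tubeV n) :
    gᵀ * matRI n (S.map (Int.cast : ℤ → ℝ)) * g = matRI n (S.map (Int.cast : ℤ → ℝ)) ∧
    (g⁻¹)ᵀ * matRI n (S.map (Int.cast : ℤ → ℝ)) * g⁻¹ = matRI n (S.map (Int.cast : ℤ → ℝ)) :=
  stmt3_general n S hSpos g hg hfix

end
end

section
/- Let Γ be a subgroup of {g ∈ SL_{n+4}(ℤ) : gᵗS₁g = S₁} such that: (i) for every D ∈ SL₂(ℤ), the block-diagonal matrix M_D = diag(D*, 1_n, D) belongs to Γ, where D* := JᵗDJ with J = [[−1,0],[0,1]]; and (ii) (one-cusp hypothesis) for every ℓ ∈ X there exists K ∈ Γ such that the ℚ-span of the first two columns of K equals the ℚ-span of the two columns of ℓ in ℚ^{n+4}. Here X := {ℓ ∈ Mat_{n+4,2}(ℤ) : ℓ is primitive and ℓᵗS₁ℓ = 0}, where ℓ is called primitive if there exists A ∈ Mat_{2,n+4}(ℤ) with Aℓ = 1₂. Let Γ_J := {γ ∈ Γ : γ maps the ℚ-span of e₁, e₂ to itself} (e₁,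 e₂ the first two standard basis vectors), and let GL₂(ℤ) act on X by right multiplication. Then the map γ ↦ γ⁻¹·(e₁ | e₂) (the matrix of the first two columns of γ⁻¹) induces a well-defined bijection from the set of right cosets Γ_J\Γ onto the orbit space X/GL₂(ℤ). -/
open Matrix

noncomputable section

/-- `S₁ = [[0,0,1],[0,S₀,0],[1,0,0]] ∈ Mat_{n+4}(ℤ)` where
`S₀ = [[0,0,1],[0,−S,0],[1,0,0]] ∈ Mat_{n+2}(ℤ)`. -/
def matS1Z (n : ℕ) (S : Matrix (Fin n) (Fin n) ℤ) : Matrix (Fin (n + 4)) (Fin (n + 4)) ℤ :=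
  triBorder (triBorder (-S))

/-- `J = [[−1,0],[0,1]]`. -/
def Jmat : Matrix (Fin 2) (Fin 2) ℤ := !![-1, 0; 0, 1]

/-- `M_D = diag(D*, 1_n, D)` with `D* = Jᵀ D J`. -/
def MDmat (n : ℕ) (D : Matrix (Fin 2) (Fin 2) ℤ) : Matrix (Fin (n + 4)) (Fin (n + 4)) ℤ :=
  Matrix.of fun i j =>
    if hij : i.val < 2 ∧ j.val < 2 then
      (Jmatᵀ * D * Jmat) ⟨i.val, hij.1⟩ ⟨j.val, hij.2⟩
    else if hij2 : n + 2 ≤ i.val ∧ n + 2 ≤ j.val then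
      D ⟨i.val - (n + 2), by have := i.isLt; omega⟩ ⟨j.val - (n + 2), by have := j.isLt; omega⟩
    else if i = j then 1 else 0

/-- `X = {ℓ ∈ Mat_{n+4,2}(ℤ) : ℓ primitive, ℓᵀ S₁ ℓ = 0}`, where `ℓ` is primitive iff it
admits an integral left inverse. -/
def Xset (n : ℕ) (S : Matrix (Fin n) (Fin n) ℤ) : Set (Matrix (Fin (n + 4)) (Fin 2) ℤ) :=
  {ℓ | (∃ A : Matrix (Fin 2) (Fin (n + 4)) ℤ, A * ℓ = 1) ∧ ℓᵀ * matS1Z n S * ℓ = 0}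

/-- The `ℚ`-span of the two columns of an `(n+4)×2` integral matrix. -/
def spanPair (n : ℕ) (ℓ : Matrix (Fin (n + 4)) (Fin 2) ℤ) : Submodule ℚ (Fin (n + 4) → ℚ) :=
  Submodule.span ℚ {fun i => ((ℓ i 0 : ℤ) : ℚ), fun i => ((ℓ i 1 : ℤ) : ℚ)}

/-- The `ℚ`-span of the first two columns of an `(n+4)×(n+4)` integral matrix. -/
def spanFirstTwo (n : ℕ) (K : Matrix (Fin (n + 4)) (Fin (n + 4)) ℤ) :
    Submodule ℚ (Fin (n + 4) → ℚ) :=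
  Submodule.span ℚ {fun i => ((K i 0 : ℤ) : ℚ), fun i => ((K i 1 : ℤ) : ℚ)}

/-- The `ℚ`-span of the first two standard basis vectors `e₁, e₂`. -/
def Esp (n : ℕ) : Submodule ℚ (Fin (n + 4) → ℚ) :=
  Submodule.span ℚ {Pi.single (0 : Fin (n + 4)) (1 : ℚ), Pi.single (1 : Fin (n + 4)) (1 : ℚ)}

/-- The parabolic subgroup `Γ_J = {γ ∈ Γ : γ maps the ℚ-span of e₁, e₂ to itself}`. -/
def GammaJ (n : ℕ) (Γ : Set (Matrix (Fin (n + 4)) (Fin (n + 4)) ℤ)) :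
    Set (Matrix (Fin (n + 4)) (Fin (n + 4)) ℤ) :=
  {γ ∈ Γ | Submodule.map ((γ.map (Int.cast : ℤ → ℚ)).mulVecLin) (Esp n) = Esp n}

/-- The matrix of the first two columns of `γ⁻¹`. -/
def Fmap (n : ℕ) (γ : Matrix (Fin (n + 4)) (Fin (n + 4)) ℤ) : Matrix (Fin (n + 4)) (Fin 2) ℤ :=
  Matrix.of fun i (j : Fin 2) => γ⁻¹ i ⟨j.val, by omega⟩

/-!
The rational column span of a primitive integral `(n+4)×2` matrix determines the matrix up to
right multiplication by `GL₂(ℤ)`: if `ℓ` and `m` have left inverses `B` and `A` and the same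
span, then `m A` is the identity on that span, so `ℓ = m (A ℓ)`; symmetrically `m = ℓ (B m)`,
and `(B m)(A ℓ) = 1`. The condition `γ δ⁻¹ ∈ Γ_J` says exactly that `γ⁻¹ (e₁ | e₂)` and
`δ⁻¹ (e₁ | e₂)` have the same span, which gives well-definedness and injectivity. The image lies
in `X` because `γ⁻¹ ∈ Γ` preserves `S₁` and `e₁, e₂` span an `S₁`-isotropic plane; surjectivity
is the one-cusp hypothesis.
-/

section IntColSpan

variable {ι κ : Type*} [Fintype κ]

def intColSpan (ℓ : Matrix ι κ ℤ) : Submodule ℚ (ι → ℚ) :=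
  LinearMap.range (ℓ.map (Int.cast : ℤ → ℚ)).mulVecLin

lemma map_intCast_mul {μ : Type*} (A : Matrix ι κ ℤ) (B : Matrix κ μ ℤ) :
    (A * B).map (Int.cast : ℤ → ℚ) =
      (A.map (Int.cast : ℤ → ℚ) : Matrix ι κ ℚ) * B.map (Int.cast : ℤ → ℚ) :=
  Matrix.map_mul (f := Int.castRingHom ℚ)

lemma intColSpan_mul {μ : Type*} [Fintype μ] (A : Matrix ι κ ℤ) (ℓ : Matrix κ μ ℤ) :
    intColSpan (A * ℓ) = (intColSpan ℓ).map (A.map (Int.cast : ℤ → ℚ)).mulVecLin := by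
  rw [intColSpan, intColSpan, map_intCast_mul, Matrix.mulVecLin_mul, LinearMap.range_comp]

lemma intColSpan_mul_le (ℓ : Matrix ι κ ℤ) (U : Matrix κ κ ℤ) :
    intColSpan (ℓ * U) ≤ intColSpan ℓ := by
  rw [intColSpan, map_intCast_mul, Matrix.mulVecLin_mul]
  exact LinearMap.range_comp_le_range _ _

lemma intColSpan_mul_of_isUnit_det [DecidableEq κ] (ℓ : Matrix ι κ ℤ) {U : Matrix κ κ ℤ}
    (hU : IsUnit U.det) : intColSpan (ℓ * U) = intColSpan ℓ := by
  refine (intColSpan_mul_le ℓ U).antisymm ?_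
  simpa [Matrix.mul_assoc, Matrix.mul_nonsing_inv U hU] using intColSpan_mul_le (ℓ * U) U⁻¹

lemma mul_mul_eq_of_intColSpan_le [Fintype ι] [DecidableEq κ] {ℓ m : Matrix ι κ ℤ}
    {A : Matrix κ ι ℤ} (hA : A * m = 1) (hle : intColSpan ℓ ≤ intColSpan m) :
    m * (A * ℓ) = ℓ := by
  refine Matrix.map_injective (f := (Int.cast : ℤ → ℚ)) Int.cast_injective ?_
  refine Matrix.ext_iff_mulVec.2 fun v => ?_
  obtain ⟨w, hw⟩ := hle ⟨v, rfl⟩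
  have hAm : (A.map (Int.cast : ℤ → ℚ) : Matrix κ ι ℚ) * m.map (Int.cast : ℤ → ℚ) = 1 := by
    rw [← map_intCast_mul, hA, Matrix.map_one _ Int.cast_zero Int.cast_one]
  simp only [Matrix.mulVecLin_apply] at hw
  simp only [map_intCast_mul, ← Matrix.mulVec_mulVec, ← hw]
  rw [Matrix.mulVec_mulVec _ (A.map (Int.cast : ℤ → ℚ)), hAm, Matrix.one_mulVec]

lemma exists_isUnit_det_eq_mul_iff_intColSpan_eq [Fintype ι] [DecidableEq κ]
    {ℓ m : Matrix ι κ ℤ} {A B : Matrix κ ι ℤ} (hB : B * ℓ = 1) (hA : A * m = 1) :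
    (∃ U : Matrix κ κ ℤ, IsUnit U.det ∧ ℓ = m * U) ↔ intColSpan ℓ = intColSpan m := by
  constructor
  · rintro ⟨U, hU, rfl⟩
    exact intColSpan_mul_of_isUnit_det m hU
  · intro h
    have hℓ : m * (A * ℓ) = ℓ := mul_mul_eq_of_intColSpan_le hA h.le
    have hm : ℓ * (B * m) = m := mul_mul_eq_of_intColSpan_le hB h.ge
    have hVU : B * m * (A * ℓ) = 1 :=
      calc B * m * (A * ℓ) = B * (ℓ * (B * m * (A * ℓ))) := by
            rw [← Matrix.mul_assoc B ℓ, hB, Matrix.one_mul]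
        _ = B * ℓ := by rw [← Matrix.mul_assoc ℓ, hm, hℓ]
        _ = 1 := hB
    refine ⟨A * ℓ, IsUnit.of_mul_eq_one_right (B * m).det ?_, hℓ.symm⟩
    rw [← Matrix.det_mul, hVU, Matrix.det_one]

end IntColSpan

lemma exists_mem_stabilizer_eq_mul_iff {ι κ : Type*} [Fintype ι] [DecidableEq ι] [Fintype κ]
    {Γ : Set (Matrix ι ι ℤ)} (hunit : ∀ g ∈ Γ, IsUnit g.det)
    (hmul : ∀ g ∈ Γ, ∀ h ∈ Γ, g * h ∈ Γ) (hinv : ∀ g ∈ Γ, g⁻¹ ∈ Γ) (E : Matrix ι κ ℤ)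
    {γ δ : Matrix ι ι ℤ} (hγ : γ ∈ Γ) (hδ : δ ∈ Γ) :
    (∃ p ∈ Γ, intColSpan (p * E) = intColSpan E ∧ γ = p * δ) ↔
      intColSpan (γ⁻¹ * E) = intColSpan (δ⁻¹ * E) := by
  constructor
  · rintro ⟨p, hp, hpE, rfl⟩
    have hp' : intColSpan (p⁻¹ * E) = intColSpan E :=
      calc intColSpan (p⁻¹ * E) = intColSpan (p⁻¹ * (p * E)) := by
            rw [intColSpan_mul p⁻¹ (p * E), hpE, ← intColSpan_mul]
        _ = intColSpan E := by
            rw [← Matrix.mul_assoc, Matrix.nonsing_inv_mul p (hunit p hp), Matrix.one_mul]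
    rw [Matrix.mul_inv_rev, Matrix.mul_assoc, intColSpan_mul δ⁻¹ (p⁻¹ * E), hp',
      ← intColSpan_mul]
  · intro h
    refine ⟨γ * δ⁻¹, hmul γ hγ δ⁻¹ (hinv δ hδ), ?_, ?_⟩
    · rw [Matrix.mul_assoc, intColSpan_mul, ← h, ← intColSpan_mul, ← Matrix.mul_assoc,
        Matrix.mul_nonsing_inv γ (hunit γ hγ), Matrix.one_mul]
    · rw [Matrix.mul_assoc, Matrix.nonsing_inv_mul δ (hunit δ hδ), Matrix.mul_one]

lemma spanPair_eq_intColSpan {n : ℕ} (ℓ : Matrix (Fin (n + 4)) (Fin 2) ℤ) :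
    spanPair n ℓ = intColSpan ℓ := by
  rw [spanPair, intColSpan, Matrix.range_mulVecLin]
  congr 1
  ext v
  simp [Set.mem_range, Fin.exists_fin_two, eq_comm, funext_iff]

-- The paper's `(e₁ | e₂)`.
def frame (n : ℕ) : Matrix (Fin (n + 4)) (Fin 2) ℤ :=
  (1 : Matrix (Fin (n + 4)) (Fin (n + 4)) ℤ).submatrix id (Fin.castLE (by omega))

lemma mul_frame {m : Type*} {n : ℕ} (M : Matrix m (Fin (n + 4)) ℤ) :
    M * frame n = M.submatrix id (Fin.castLE (by omega)) :=
  Matrix.mul_submatrix_one (Equiv.refl _) _ M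

lemma Fmap_eq_nonsing_inv_mul_frame {n : ℕ} (γ : Matrix (Fin (n + 4)) (Fin (n + 4)) ℤ) :
    Fmap n γ = γ⁻¹ * frame n := by
  rw [mul_frame]
  rfl

lemma spanFirstTwo_eq_intColSpan {n : ℕ} (K : Matrix (Fin (n + 4)) (Fin (n + 4)) ℤ) :
    spanFirstTwo n K = intColSpan (K * frame n) := by
  rw [← spanPair_eq_intColSpan, mul_frame]
  rfl

lemma Esp_eq_intColSpan (n : ℕ) : Esp n = intColSpan (frame n) := by
  rw [← Matrix.one_mul (frame n), ← spanFirstTwo_eq_intColSpan, Esp, spanFirstTwo]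
  congr 3 <;> funext i <;> simp [Pi.single_apply, Matrix.one_apply]

lemma mem_GammaJ_iff {n : ℕ} {Γ : Set (Matrix (Fin (n + 4)) (Fin (n + 4)) ℤ)}
    {γ : Matrix (Fin (n + 4)) (Fin (n + 4)) ℤ} :
    γ ∈ GammaJ n Γ ↔ γ ∈ Γ ∧ intColSpan (γ * frame n) = intColSpan (frame n) := by
  rw [GammaJ, Set.mem_ofPred_eq, Esp_eq_intColSpan, ← intColSpan_mul]

lemma transpose_frame_mul {m : Type*} {n : ℕ} (M : Matrix (Fin (n + 4)) m ℤ) :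
    (frame n)ᵀ * M = M.submatrix (Fin.castLE (by omega)) id := by
  rw [frame, Matrix.transpose_submatrix, Matrix.transpose_one]
  exact Matrix.one_submatrix_mul _ (Equiv.refl _) M

lemma transpose_frame_mul_frame (n : ℕ) : (frame n)ᵀ * frame n = 1 := by
  rw [transpose_frame_mul, frame, Matrix.submatrix_submatrix, Function.id_comp, Function.comp_id]
  exact Matrix.submatrix_one _ (Fin.castLE_injective _)

lemma transpose_frame_mul_matS1Z_mul_frame (n : ℕ) (S : Matrix (Fin n) (Fin n) ℤ) :
    (frame n)ᵀ * matS1Z n S * frame n = 0 := by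
  rw [mul_frame, transpose_frame_mul]
  ext i j
  have hi := i.isLt
  have hj := j.isLt
  simp only [Matrix.submatrix_apply, id, Matrix.zero_apply, matS1Z, triBorder, Matrix.of_apply,
    Fin.val_castLE]
  split_ifs <;> first | rfl | omega

lemma mul_frame_mem_Xset {n : ℕ} {S : Matrix (Fin n) (Fin n) ℤ}
    {g : Matrix (Fin (n + 4)) (Fin (n + 4)) ℤ} (hg : IsUnit g.det)
    (hS : gᵀ * matS1Z n S * g = matS1Z n S) : g * frame n ∈ Xset n S := by
  refine ⟨⟨(frame n)ᵀ * g⁻¹, ?_⟩, ?_⟩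
  · rw [Matrix.mul_assoc, ← Matrix.mul_assoc g⁻¹, Matrix.nonsing_inv_mul g hg, Matrix.one_mul,
      transpose_frame_mul_frame]
  · calc (g * frame n)ᵀ * matS1Z n S * (g * frame n)
          = (frame n)ᵀ * (gᵀ * matS1Z n S * g) * frame n := by
            simp only [Matrix.transpose_mul, Matrix.mul_assoc]
      _ = 0 := by rw [hS, transpose_frame_mul_matS1Z_mul_frame]

theorem stmt5_general (n : ℕ) (S : Matrix (Fin n) (Fin n) ℤ)
    (Γ : Set (Matrix (Fin (n + 4)) (Fin (n + 4)) ℤ))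
    (hΓsub : ∀ g ∈ Γ, g.det = 1 ∧ gᵀ * matS1Z n S * g = matS1Z n S)
    (hΓmul : ∀ g ∈ Γ, ∀ h ∈ Γ, g * h ∈ Γ)
    (hΓinv : ∀ g ∈ Γ, ∃ h ∈ Γ, g * h = 1 ∧ h * g = 1)
    (hcusp : ∀ ℓ ∈ Xset n S, ∃ K ∈ Γ, spanFirstTwo n K = spanPair n ℓ) :
    (∀ γ ∈ Γ, Fmap n γ ∈ Xset n S) ∧
    (∀ γ ∈ Γ, ∀ δ ∈ Γ,
      ((∃ p ∈ GammaJ n Γ, γ = p * δ) ↔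
        ∃ U : Matrix (Fin 2) (Fin 2) ℤ, IsUnit U.det ∧ Fmap n γ = Fmap n δ * U)) ∧
    (∀ ℓ ∈ Xset n S, ∃ γ ∈ Γ, ∃ U : Matrix (Fin 2) (Fin 2) ℤ,
      IsUnit U.det ∧ ℓ = Fmap n γ * U) := by
  have hunit : ∀ g ∈ Γ, IsUnit g.det := fun g hg => by simp [(hΓsub g hg).1]
  have hinv : ∀ g ∈ Γ, g⁻¹ ∈ Γ := fun g hg => by
    obtain ⟨h, hh, hgh, -⟩ := hΓinv g hg
    rwa [Matrix.inv_eq_right_inv hgh]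
  have hX : ∀ γ ∈ Γ, Fmap n γ ∈ Xset n S := fun γ hγ => by
    rw [Fmap_eq_nonsing_inv_mul_frame]
    exact mul_frame_mem_Xset (hunit _ (hinv γ hγ)) (hΓsub _ (hinv γ hγ)).2
  refine ⟨hX, fun γ hγ δ hδ => ?_, fun ℓ hℓ => ?_⟩
  · obtain ⟨⟨B, hB⟩, -⟩ := hX γ hγ
    obtain ⟨⟨A, hA⟩, -⟩ := hX δ hδ
    simp only [mem_GammaJ_iff, and_assoc]
    rw [exists_isUnit_det_eq_mul_iff_intColSpan_eq hB hA, Fmap_eq_nonsing_inv_mul_frame,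
      Fmap_eq_nonsing_inv_mul_frame]
    exact exists_mem_stabilizer_eq_mul_iff hunit hΓmul hinv (frame n) hγ hδ
  · obtain ⟨K, hK, hKℓ⟩ := hcusp ℓ hℓ
    obtain ⟨⟨B, hB⟩, -⟩ := hℓ
    obtain ⟨⟨A, hA⟩, -⟩ := hX K⁻¹ (hinv K hK)
    refine ⟨K⁻¹, hinv K hK, (exists_isUnit_det_eq_mul_iff_intColSpan_eq hB hA).2 ?_⟩
    rw [Fmap_eq_nonsing_inv_mul_frame, Matrix.nonsing_inv_nonsing_inv K (hunit K hK),
      ← spanFirstTwo_eq_intColSpan, hKℓ, spanPair_eq_intColSpan]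

/-- **The cosets `Γ_J\Γ` biject with the orbits `X/GL₂(ℤ)` (one-cusp case).**
Under hypotheses (i) (`M_D ∈ Γ` for all `D ∈ SL₂(ℤ)`) and (ii) (the one-cusp
hypothesis), the map `γ ↦ γ⁻¹·(e₁|e₂)` lands in `X`, two elements of `Γ` lie in the
same right coset of `Γ_J` iff their images lie in the same `GL₂(ℤ)`-orbit (well
definedness and injectivity), and every `GL₂(ℤ)`-orbit in `X` is hit (surjectivity). -/
theorem stmt5 (n : ℕ) (hn : 1 ≤ n) (S : Matrix (Fin n) (Fin n) ℤ)
    (hSsymm : S.IsSymm) (hSpos : (S.map (Int.cast : ℤ → ℝ)).PosDef)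
    (hSeven : ∀ x : Fin n → ℤ, 2 ∣ x ⬝ᵥ S.mulVec x)
    (Γ : Set (Matrix (Fin (n + 4)) (Fin (n + 4)) ℤ))
    (hΓsub : ∀ g ∈ Γ, g.det = 1 ∧ gᵀ * matS1Z n S * g = matS1Z n S)
    (hΓone : (1 : Matrix (Fin (n + 4)) (Fin (n + 4)) ℤ) ∈ Γ)
    (hΓmul : ∀ g ∈ Γ, ∀ h ∈ Γ, g * h ∈ Γ)
    (hΓinv : ∀ g ∈ Γ, ∃ h ∈ Γ, g * h = 1 ∧ h * g = 1)
    (hMD : ∀ D : Matrix (Fin 2) (Fin 2) ℤ, D.det = 1 → MDmat n D ∈ Γ)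
    (hcusp : ∀ ℓ ∈ Xset n S, ∃ K ∈ Γ, spanFirstTwo n K = spanPair n ℓ) :
    (∀ γ ∈ Γ, Fmap n γ ∈ Xset n S) ∧
    (∀ γ ∈ Γ, ∀ δ ∈ Γ,
      ((∃ p ∈ GammaJ n Γ, γ = p * δ) ↔
        ∃ U : Matrix (Fin 2) (Fin 2) ℤ, IsUnit U.det ∧ Fmap n γ = Fmap n δ * U)) ∧
    (∀ ℓ ∈ Xset n S, ∃ γ ∈ Γ, ∃ U : Matrix (Fin 2) (Fin 2) ℤ,
      IsUnit U.det ∧ ℓ = Fmap n γ * U) :=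
  stmt5_general n S Γ hΓsub hΓmul hΓinv hcusp
end
end
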